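/- arXiv:2509.17045 — 3 statements merged into one kernel-verified Lean document; each statement's English description precedes it below -/
import Mathlib

section
/- The Vandermonde determinant Δ_N(x) = ∏_{1≤i<j≤N}(x_j − x_i) is an eigenfunction of the second-order differential operator ∑_{i=1}^N [x_i(1+x_i) ∂²/∂x_i² + ((2−2N−𝔰)x_i + (α+1)) ∂/∂x_i] with eigenvalue λ_𝔰^N = N(N−1)(−4N+2−3𝔰)/6; that is, applying the operator to Δ_N yields λ_𝔰^N · Δ_N. -/
/-!
Along the `i`-th coordinate, Laplace expansion of the Vandermonde matrix `V` in row `i` writes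
`Δ_N` as the polynomial `t ↦ ∑ k, (adj V) k i * t ^ k`. The one-variable operator
`t (1 + t) ∂² + (a t + b) ∂` sends `t ^ k` to `λ_k t ^ k + μ_k t ^ (k - 1)` with
`λ_k = k (k - 1) + a k`, and `adj V * V = det V • 1` says `∑ i, (adj V) k i * x_i ^ m = δ_{km} det V`
for `m < N`. So the lower-order terms cancel after summing over `i`, and `L Δ_N = (∑ k < N, λ_k) Δ_N`.
-/

open scoped BigOperators

/-- Partial derivative of `f : (Fin N → ℝ) → ℝ` in the `i`-th coordinate. -/
noncomputable def pderiv0 {N : ℕ} (i : Fin N) (f : (Fin N → ℝ) → ℝ) : (Fin N → ℝ) → ℝ :=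
  fun x => deriv (fun t => f (Function.update x i t)) (x i)

/-- The Vandermonde determinant `Δ_N(x) = ∏_{i<j} (x_j - x_i)`. -/
noncomputable def Vand0 (N : ℕ) (x : Fin N → ℝ) : ℝ :=
  ∏ i : Fin N, ∏ j ∈ Finset.Ioi i, (x j - x i)


open Finset Matrix

namespace Matrix

variable {n R : Type*} [Fintype n] [DecidableEq n] [CommRing R]

theorem det_updateRow_eq_sum_mul_adjugate (M : Matrix n n R) (i : n) (v : n → R) :
    (M.updateRow i v).det = ∑ k, v k * adjugate M k i := by
  rw [← cramer_transpose_apply, cramer_eq_adjugate_mulVec, ← adjugate_transpose]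
  simp [mulVec, dotProduct, mul_comm]

theorem vandermonde_update {N : ℕ} (x : Fin N → R) (i : Fin N) (t : R) :
    vandermonde (Function.update x i t) = (vandermonde x).updateRow i fun k => t ^ (k : ℕ) := by
  ext j k
  by_cases h : j = i
  · subst h; simp [vandermonde_apply]
  · simp [vandermonde_apply, h]

theorem sum_adjugate_vandermonde_mul_pow {N : ℕ} (x : Fin N → R) (k : Fin N) {m : ℕ}
    (hm : m < N) :
    ∑ i, adjugate (vandermonde x) k i * x i ^ m = if (k : ℕ) = m then (vandermonde x).det else 0 := by
  have h := congrFun (congrFun (adjugate_mul (vandermonde x)) k) ⟨m, hm⟩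
  simp only [mul_apply, vandermonde_apply, smul_apply, one_apply, Fin.ext_iff] at h
  simpa using h

end Matrix

theorem jacobi_action_pow (k : ℕ) (a b t : ℝ) :
    t * (1 + t) * (k * ((k - 1 : ℕ) * t ^ (k - 1 - 1))) + (a * t + b) * (k * t ^ (k - 1))
      = (k * (k - 1) + a * k) * t ^ k + (k * (k - 1) + b * k) * t ^ (k - 1) := by
  rcases k with _ | _ | k
  · simp
  · simp
  · simp only [Nat.add_sub_cancel, pow_succ]
    push_cast
    ring

theorem sum_range_jacobi_eigenvalue (a : ℝ) (N : ℕ) :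
    ∑ k ∈ range N, ((k : ℝ) * (k - 1) + a * k)
      = N * (N - 1) * (N - 2) / 3 + a * (N * (N - 1) / 2) := by
  induction N with
  | zero => simp
  | succ N ih =>
    rw [sum_range_succ, ih]
    push_cast
    ring

section

variable {N : ℕ}

theorem pderiv0_update (i : Fin N) (f : (Fin N → ℝ) → ℝ) (x : Fin N → ℝ) (t : ℝ) :
    pderiv0 i f (Function.update x i t) = deriv (fun u => f (Function.update x i u)) t := by
  simp [pderiv0]

theorem Vand0_update (x : Fin N → ℝ) (i : Fin N) (t : ℝ) :
    Vand0 N (Function.update x i t) = ∑ k, adjugate (vandermonde x) k i * t ^ (k : ℕ) := by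
  rw [Vand0, ← det_vandermonde, vandermonde_update, det_updateRow_eq_sum_mul_adjugate]
  exact sum_congr rfl fun k _ => mul_comm _ _

theorem pderiv0_Vand0_update (x : Fin N → ℝ) (i : Fin N) (t : ℝ) :
    pderiv0 i (Vand0 N) (Function.update x i t)
      = ∑ k, adjugate (vandermonde x) k i * ((k : ℕ) * t ^ ((k : ℕ) - 1)) := by
  simp_rw [pderiv0_update, Vand0_update]
  exact (HasDerivAt.fun_sum fun (k : Fin N) _ => (hasDerivAt_pow (k : ℕ) t).const_mul _).deriv

theorem pderiv0_Vand0 (x : Fin N → ℝ) (i : Fin N) :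
    pderiv0 i (Vand0 N) x
      = ∑ k, adjugate (vandermonde x) k i * ((k : ℕ) * x i ^ ((k : ℕ) - 1)) := by
  simpa using pderiv0_Vand0_update x i (x i)

theorem pderiv0_pderiv0_Vand0 (x : Fin N → ℝ) (i : Fin N) :
    pderiv0 i (pderiv0 i (Vand0 N)) x = ∑ k, adjugate (vandermonde x) k i *
      ((k : ℕ) * (((k : ℕ) - 1 : ℕ) * x i ^ ((k : ℕ) - 1 - 1))) := by
  change deriv (fun t => pderiv0 i (Vand0 N) (Function.update x i t)) (x i) = _
  simp_rw [pderiv0_Vand0_update]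
  exact (HasDerivAt.fun_sum fun (k : Fin N) _ =>
    ((hasDerivAt_pow ((k : ℕ) - 1) (x i)).const_mul _).const_mul _).deriv

noncomputable def jacobiOp (a b : ℝ) (f : (Fin N → ℝ) → ℝ) (x : Fin N → ℝ) : ℝ :=
  ∑ i, (x i * (1 + x i) * pderiv0 i (pderiv0 i f) x + (a * x i + b) * pderiv0 i f x)

theorem jacobiOp_Vand0 (a b : ℝ) (x : Fin N → ℝ) :
    jacobiOp a b (Vand0 N) x
      = (N * (N - 1) * (N - 2) / 3 + a * (N * (N - 1) / 2)) * Vand0 N x := by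
  set A := adjugate (vandermonde x)
  have diagonal (k : Fin N) : ∑ i, A k i * x i ^ (k : ℕ) = Vand0 N x := by
    rw [sum_adjugate_vandermonde_mul_pow x k k.is_lt, if_pos rfl, Vand0, det_vandermonde]
  have lower (k : Fin N) : (((k : ℕ) : ℝ) * ((k : ℕ) - 1) + b * (k : ℕ))
      * ∑ i, A k i * x i ^ ((k : ℕ) - 1) = 0 := by
    rcases Nat.eq_zero_or_pos k with hk | hk
    · simp [hk]
    · rw [sum_adjugate_vandermonde_mul_pow x k (by omega), if_neg (by omega), mul_zero]
  calc jacobiOp a b (Vand0 N) x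
      = ∑ i, ∑ k, A k i * ((((k : ℕ) : ℝ) * ((k : ℕ) - 1) + a * (k : ℕ)) * x i ^ (k : ℕ)
          + (((k : ℕ) : ℝ) * ((k : ℕ) - 1) + b * (k : ℕ)) * x i ^ ((k : ℕ) - 1)) := by
        unfold jacobiOp
        refine sum_congr rfl fun i _ => ?_
        rw [pderiv0_pderiv0_Vand0, pderiv0_Vand0, mul_sum, mul_sum, ← sum_add_distrib]
        refine sum_congr rfl fun k _ => ?_
        rw [← jacobi_action_pow]
        ring
    _ = ∑ k : Fin N, ((((k : ℕ) : ℝ) * ((k : ℕ) - 1) + a * (k : ℕ)) * ∑ i, A k i * x i ^ (k : ℕ)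
          + (((k : ℕ) : ℝ) * ((k : ℕ) - 1) + b * (k : ℕ)) * ∑ i, A k i * x i ^ ((k : ℕ) - 1)) := by
        rw [sum_comm]
        simp only [mul_sum, ← sum_add_distrib]
        refine sum_congr rfl fun k _ => sum_congr rfl fun i _ => ?_
        ring
    _ = (∑ k : Fin N, (((k : ℕ) : ℝ) * ((k : ℕ) - 1) + a * (k : ℕ))) * Vand0 N x := by
        simp only [diagonal, lower, add_zero, sum_mul]
    _ = _ := by
        rw [Fin.sum_univ_eq_sum_range (fun k => (k : ℝ) * (k - 1) + a * k),
          sum_range_jacobi_eigenvalue]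

end

theorem stmt0_general (N : ℕ) (s α : ℝ) (x : Fin N → ℝ) :
    (∑ i : Fin N,
      (x i * (1 + x i) * pderiv0 i (pderiv0 i (Vand0 N)) x
        + ((2 - 2 * (N : ℝ) - s) * x i + (α + 1)) * pderiv0 i (Vand0 N) x))
    = ((N : ℝ) * ((N : ℝ) - 1) * (-4 * (N : ℝ) + 2 - 3 * s) / 6) * Vand0 N x :=
  (jacobiOp_Vand0 (2 - 2 * (N : ℝ) - s) (α + 1) x).trans (by ring)

theorem stmt0 (N : ℕ) (s α : ℝ) (hα : -1 < α) (x : Fin N → ℝ) :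
    (∑ i : Fin N,
      (x i * (1 + x i) * pderiv0 i (pderiv0 i (Vand0 N)) x
        + ((2 - 2 * (N : ℝ) - s) * x i + (α + 1)) * pderiv0 i (Vand0 N) x))
    = ((N : ℝ) * ((N : ℝ) - 1) * (-4 * (N : ℝ) + 2 - 3 * s) / 6) * Vand0 N x :=
  stmt0_general N s α x
end

section
/- For α > −1 and x ∈ ℝ^N with 0 < x_1 < ⋯ < x_N, the measure Λ_{α,N}^N(x, dy) = (α+1)_N (∏_{k=1}^N y_k^α / x_k^{α+1}) (Δ_N(y)/Δ_N(x)) 1_{W_{≥}^{N,N}(x)}(y) dy is a probability measure, i.e. its total mass equals 1. -/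
open scoped BigOperators
open MeasureTheory

noncomputable def Vand9 {n : ℕ} (v : Fin n → ℝ) : ℝ :=
  ∏ i : Fin n, ∏ j ∈ Finset.Ioi i, (v j - v i)

noncomputable def poch9 (a : ℝ) (n : ℕ) : ℝ := ∏ k ∈ Finset.range n, (a + k)

/-- `W_{≥}^{N,N}(x) = {y : 0 ≤ y_1 ≤ x_1 ≤ y_2 ≤ ⋯ ≤ y_N ≤ x_N}`. -/
def W29 {N : ℕ} (x : Fin N → ℝ) : Set (Fin N → ℝ) :=
  {y | (∀ k : Fin N, 0 ≤ y k ∧ y k ≤ x k) ∧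
    ∀ (k : Fin N) (h : (k : ℕ) + 1 < N), x k ≤ y ⟨(k : ℕ) + 1, h⟩}

/-!
On the box `W = ∏ₖ [xₖ₋₁, xₖ]` (with `x₀ = 0`) the integrand `∏ₖ yₖ^α · Δ(y)` is the
determinant `det (yₖ^(α+j))`. Expanding the determinant and applying Fubini to each of its terms
gives `det (∫_{xₖ₋₁}^{xₖ} t^(α+j) dt)`. The columns of this matrix are the differences of
consecutive columns of `((α+j+1)⁻¹ xₖ^(α+j+1))`, so it has the same determinant, which is the
scaled Vandermonde determinant `(α+1)_N⁻¹ ∏ₖ xₖ^(α+1) · Δ(x)`.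
-/

section Determinants

variable {R : Type*} [CommRing R] {n : ℕ}

def prevOrZero {M : Type*} [Zero M] (v : Fin n → M) (k : Fin n) : M :=
  if _ : (k : ℕ) = 0 then 0 else v ⟨k - 1, by omega⟩

lemma apply_prevOrZero {M M' : Type*} [Zero M] [Zero M'] (g : M → M') (hg : g 0 = 0)
    (v : Fin n → M) (k : Fin n) : g (prevOrZero v k) = prevOrZero (fun i => g (v i)) k := by
  unfold prevOrZero
  split_ifs <;> simp [hg]

variable (R n) in
def consecutiveDiff : Matrix (Fin n) (Fin n) R :=
  Matrix.of fun l k => if l = k then 1 else if (l : ℕ) + 1 = k then -1 else 0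

lemma mul_consecutiveDiff_apply (A : Matrix (Fin n) (Fin n) R) (i k : Fin n) :
    (A * consecutiveDiff R n) i k = A i k - prevOrZero (A i) k := by
  rw [Matrix.mul_apply]
  unfold prevOrZero consecutiveDiff
  split_ifs with hk
  · rw [Fintype.sum_eq_single k fun l hl => by simp [hl, show (l : ℕ) + 1 ≠ k by omega]]
    simp
  · have hne : k ≠ ⟨k - 1, by omega⟩ := Fin.ne_of_val_ne (by dsimp only; omega)
    rw [Fintype.sum_eq_add k ⟨k - 1, by omega⟩ hne fun l ⟨hl, hl'⟩ => by
      simp [hl, show (l : ℕ) + 1 ≠ k from fun h => hl' (Fin.ext (by simp; omega))]]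
    simp [hne.symm, show (k : ℕ) - 1 + 1 = k by omega, sub_eq_add_neg]

lemma det_consecutiveDiff : (consecutiveDiff R n).det = 1 := by
  rw [Matrix.det_of_isUpperTriangular]
  · simp [consecutiveDiff]
  · intro i j hij
    simp [consecutiveDiff, show i ≠ j from fun h => hij.ne (congrArg id h.symm),
      show (i : ℕ) + 1 ≠ j by have : (j : ℕ) < i := hij; omega]

lemma det_sub_prevOrZero (A : Matrix (Fin n) (Fin n) R) :
    (Matrix.of fun i k => A i k - prevOrZero (A i) k).det = A.det := by
  have : Matrix.of (fun i k => A i k - prevOrZero (A i) k) = A * consecutiveDiff R n := by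
    ext i k
    rw [mul_consecutiveDiff_apply, Matrix.of_apply]
  rw [this, Matrix.det_mul, det_consecutiveDiff, mul_one]

end Determinants

lemma Vand9_eq_det_vandermonde {n : ℕ} (v : Fin n → ℝ) : Vand9 v = (Matrix.vandermonde v).det :=
  (Matrix.det_vandermonde v).symm

lemma Vand9_pos {n : ℕ} {x : Fin n → ℝ} (hx : StrictMono x) : 0 < Vand9 x :=
  Finset.prod_pos fun _ _ => Finset.prod_pos fun _ hj => sub_pos.2 (hx (Finset.mem_Ioi.1 hj))

lemma poch9_eq_prod_fin (a : ℝ) (n : ℕ) : poch9 a n = ∏ j : Fin n, (a + (j : ℕ)) :=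
  (Fin.prod_univ_eq_prod_range (fun k => a + k) n).symm

lemma poch9_pos {a : ℝ} (ha : 0 < a) (n : ℕ) : 0 < poch9 a n :=
  Finset.prod_pos fun _ _ => by positivity

lemma Real.rpow_add_natCast_of_nonneg {t β : ℝ} (ht : 0 ≤ t) (hβ : -1 < β) (j : ℕ) :
    t ^ (β + j) = t ^ β * t ^ j := by
  rcases eq_or_ne (β + j) 0 with h | h
  · obtain rfl : j = 0 := by
      have : (j : ℝ) < 1 := by linarith
      exact_mod_cast Nat.lt_one_iff.mp (by exact_mod_cast this)
    simp
  · exact Real.rpow_add_natCast' ht h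

lemma det_rpow_add_natCast {n : ℕ} {β : ℝ} (hβ : -1 < β) {y : Fin n → ℝ} (hy : ∀ k, 0 ≤ y k) :
    (Matrix.of fun j k : Fin n => y k ^ (β + (j : ℕ))).det = (∏ k, y k ^ β) * Vand9 y := by
  rw [Vand9_eq_det_vandermonde, ← Matrix.det_transpose (Matrix.vandermonde y),
    ← Matrix.det_mul_row]
  congr 1
  ext j k
  simp [Real.rpow_add_natCast_of_nonneg (hy k) hβ]

lemma det_div_rpow_sub_prevOrZero {n : ℕ} {α : ℝ} (hα : -1 < α) {x : Fin n → ℝ}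
    (hx0 : ∀ k, 0 ≤ x k) :
    (Matrix.of fun j k : Fin n => (x k ^ (α + (j : ℕ) + 1) - prevOrZero x k ^ (α + (j : ℕ) + 1)) /
      (α + (j : ℕ) + 1)).det = (∏ k, x k ^ (α + 1)) * Vand9 x / poch9 (α + 1) n := by
  set A : Matrix (Fin n) (Fin n) ℝ := .of fun j k => (α + 1 + (j : ℕ))⁻¹ * x k ^ (α + 1 + (j : ℕ))
  have hA : ∀ (j : Fin n) k, A j k = x k ^ (α + (j : ℕ) + 1) / (α + (j : ℕ) + 1) := fun j k => by
    simp only [A, Matrix.of_apply, add_right_comm α 1, inv_mul_eq_div]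
  have hM : ∀ (j : Fin n) k, (x k ^ (α + (j : ℕ) + 1) - prevOrZero x k ^ (α + (j : ℕ) + 1)) /
      (α + (j : ℕ) + 1) = A j k - prevOrZero (A j) k := fun j k => by
    have hpos : (0 : ℝ) < α + (j : ℕ) + 1 := by
      have : (0 : ℝ) ≤ (j : ℕ) := Nat.cast_nonneg _
      linarith
    rw [funext (hA j), ← apply_prevOrZero (fun t => t ^ (α + (j : ℕ) + 1) / (α + (j : ℕ) + 1))
      (by simp [Real.zero_rpow hpos.ne']), sub_div]
  have hdetA : A.det = (∏ j : Fin n, (α + 1 + (j : ℕ)))⁻¹ * ((∏ k, x k ^ (α + 1)) * Vand9 x) := by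
    rw [← det_rpow_add_natCast (by linarith) hx0, ← Finset.prod_inv_distrib,
      ← Matrix.det_mul_column]
    rfl
  simp only [hM]
  rw [det_sub_prevOrZero, hdetA, poch9_eq_prod_fin, div_eq_inv_mul]

lemma integral_pi_det {ι E 𝕜 : Type*} [Fintype ι] [DecidableEq ι] [MeasurableSpace E] [RCLike 𝕜]
    {μ : ι → Measure E} [∀ i, SigmaFinite (μ i)] (f : ι → ι → E → 𝕜)
    (hf : ∀ j k, Integrable (f j k) (μ k)) :
    ∫ y, (Matrix.of fun j k => f j k (y k)).det ∂Measure.pi μ =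
      (Matrix.of fun j k => ∫ t, f j k t ∂μ k).det := by
  simp only [Matrix.det_apply, Matrix.of_apply, Units.smul_def, zsmul_eq_mul]
  rw [integral_finsetSum _ fun σ _ =>
    (Integrable.fintype_prod fun k => hf (σ k) k).const_mul _]
  simp only [integral_const_mul, integral_fintype_prod_eq_prod]

lemma integral_Icc_rpow {a b r : ℝ} (hr : -1 < r) (hab : a ≤ b) :
    ∫ t in Set.Icc a b, t ^ r = (b ^ (r + 1) - a ^ (r + 1)) / (r + 1) := by
  rw [integral_Icc_eq_integral_Ioc, ← intervalIntegral.integral_of_le hab,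
    integral_rpow (Or.inl hr)]

lemma integrableOn_Icc_rpow {a b r : ℝ} (hr : -1 < r) (hab : a ≤ b) :
    IntegrableOn (fun t : ℝ => t ^ r) (Set.Icc a b) :=
  (intervalIntegrable_iff_integrableOn_Icc_of_le hab).1 (intervalIntegral.intervalIntegrable_rpow' hr)

section Box

variable {n : ℕ} {x : Fin n → ℝ}

lemma prevOrZero_nonneg (hx0 : ∀ k, 0 ≤ x k) (k : Fin n) : 0 ≤ prevOrZero x k := by
  unfold prevOrZero
  split_ifs
  exacts [le_rfl, hx0 _]

lemma prevOrZero_le (hx0 : ∀ k, 0 ≤ x k) (hx : Monotone x) (k : Fin n) :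
    prevOrZero x k ≤ x k := by
  unfold prevOrZero
  split_ifs
  exacts [hx0 k, hx (Fin.mk_le_of_le_val (by omega))]

lemma W29_eq_pi (hx0 : ∀ k, 0 ≤ x k) :
    W29 x = Set.univ.pi fun k => Set.Icc (prevOrZero x k) (x k) := by
  ext y
  simp only [W29, Set.mem_ofPred_eq, Set.mem_pi, Set.mem_univ, true_implies, Set.mem_Icc,
    prevOrZero]
  constructor
  · rintro ⟨hbox, hstep⟩ k
    refine ⟨?_, (hbox k).2⟩
    split_ifs with hk
    · exact (hbox k).1
    · simpa [show (k : ℕ) - 1 + 1 = k by omega] using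
        hstep ⟨k - 1, by omega⟩ (by show (k : ℕ) - 1 + 1 < n; omega)
  · intro hy
    refine ⟨fun k => ⟨?_, (hy k).2⟩, fun k hk => by simpa using (hy ⟨k + 1, hk⟩).1⟩
    have := (hy k).1
    split_ifs at this
    exacts [this, (hx0 _).trans this]

lemma measurableSet_W29 (hx0 : ∀ k, 0 ≤ x k) : MeasurableSet (W29 x) := by
  rw [W29_eq_pi hx0]
  exact MeasurableSet.univ_pi fun _ => measurableSet_Icc

theorem integral_W29_prod_rpow_mul_Vand9 {α : ℝ} (hα : -1 < α) (hx0 : ∀ k, 0 ≤ x k)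
    (hx : Monotone x) :
    ∫ y in W29 x, (∏ k, y k ^ α) * Vand9 y = (∏ k, x k ^ (α + 1)) * Vand9 x / poch9 (α + 1) n := by
  have hexp : ∀ j : Fin n, -1 < α + (j : ℕ) := fun j => by
    have : (0 : ℝ) ≤ (j : ℕ) := Nat.cast_nonneg _
    linarith
  rw [W29_eq_pi hx0, setIntegral_congr_fun (MeasurableSet.univ_pi fun k => measurableSet_Icc)
      fun y hy => (det_rpow_add_natCast hα fun k =>
        (prevOrZero_nonneg hx0 k).trans (hy k trivial).1).symm,
    volume_pi, Measure.restrict_pi_pi, integral_pi_det _ fun j k =>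
      integrableOn_Icc_rpow (hexp j) (prevOrZero_le hx0 hx k)]
  simp only [integral_Icc_rpow (hexp _) (prevOrZero_le hx0 hx _)]
  exact det_div_rpow_sub_prevOrZero hα hx0

end Box

/-- `Λ_{α,N}^N(x,·)` is a probability measure: its total mass equals 1. -/
theorem stmt9 (N : ℕ) (α : ℝ) (hα : -1 < α) (x : Fin N → ℝ)
    (hx0 : ∀ k, 0 < x k) (hx : StrictMono x) :
    (∫ y : Fin N → ℝ,
      Set.indicator (W29 x)
        (fun y => poch9 (α + 1) N * (∏ k : Fin N, y k ^ α / x k ^ (α + 1)) *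
          Vand9 y / Vand9 x) y) = 1 := by
  have hx0' : ∀ k, 0 ≤ x k := fun k => (hx0 k).le
  have hpoch := poch9_pos (by linarith : 0 < α + 1) N
  have hpow : 0 < ∏ k, x k ^ (α + 1) := Finset.prod_pos fun k _ => by have := hx0 k; positivity
  have hV := Vand9_pos hx
  calc _ = poch9 (α + 1) N / ((∏ k, x k ^ (α + 1)) * Vand9 x) *
        ∫ y in W29 x, (∏ k, y k ^ α) * Vand9 y := by
        rw [integral_indicator (measurableSet_W29 hx0'), ← integral_const_mul]
        congr with y
        rw [Finset.prod_div_distrib]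
        field_simp
    _ = 1 := by
        rw [integral_W29_prod_rpow_mul_Vand9 hα hx0' hx.monotone]
        field_simp
end

section
/- For x ∈ ℝ^{N+1} with x_1 < ⋯ < x_{N+1}, the total mass of the measure L_N^{N+1}(x, dy) = N! (Δ_N(y)/Δ_{N+1}(x)) 1_{W^{N,N+1}(x)}(y) dy on ℝ^N equals 1; i.e. ∫_{x_1 ≤ y_1 ≤ x_2 ≤ ⋯ ≤ y_N ≤ x_{N+1}} Δ_N(y) dy = Δ_{N+1}(x)/N!. -/
open scoped BigOperators
open MeasureTheory

noncomputable def Vand10 {n : ℕ} (v : Fin n → ℝ) : ℝ :=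
  ∏ i : Fin n, ∏ j ∈ Finset.Ioi i, (v j - v i)

/-- `W^{N,N+1}(x) = {y : x_1 ≤ y_1 ≤ x_2 ≤ ⋯ ≤ y_N ≤ x_{N+1}}`. -/
def W110 {N : ℕ} (x : Fin (N + 1) → ℝ) : Set (Fin N → ℝ) :=
  {y | ∀ k : Fin N, x k.castSucc ≤ y k ∧ y k ≤ x k.succ}

/-!
Expanding `Δ_N(y) = det (y_k ^ e)` by the Leibniz formula, each term is a product of functions of
the separate coordinates `y_k`, and the interlacing set `W^{N,N+1}(x)` is just the box
`∏ₖ [x_k, x_{k+1}]`. So by Fubini the integral is the determinant of the integrated entries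
`(x_{k+1}^{e+1} - x_k^{e+1}) / (e+1)`. Pulling out the factors `1/(e+1)` gives `1/N!`, and the
remaining determinant is `Δ_{N+1}(x)`: it arises from the Vandermonde matrix of `x` by subtracting
from each row the previous one.
-/

namespace Matrix

variable {R : Type*} [CommRing R]

theorem det_of_pow_succ_sub_pow_castSucc {N : ℕ} (x : Fin (N + 1) → R) :
    (of fun e i : Fin N => x i.succ ^ ((e : ℕ) + 1) - x i.castSucc ^ ((e : ℕ) + 1)).det
      = (of fun e i : Fin (N + 1) => x i ^ (e : ℕ)).det := by
  set B : Matrix (Fin (N + 1)) (Fin (N + 1)) R :=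
    of fun i j => Fin.cases (x 0 ^ (j : ℕ)) (fun k => x k.succ ^ (j : ℕ) - x k.castSucc ^ (j : ℕ)) i
  have hVB : (vandermonde x).det = B.det :=
    det_eq_of_forall_row_eq_smul_add_pred (fun _ => 1) (fun _ => rfl)
      fun k j => by simp [B, vandermonde]
  refine Eq.trans ?_ (det_transpose (vandermonde x)).symm
  -- after the row operations, column 0 is `(1, 0, …, 0)` and its minor is the transposed LHS
  rw [hVB, det_succ_column_zero, Fin.sum_univ_succ]
  simp only [Fin.coe_ofNat_eq_mod, Nat.zero_mod, pow_zero, of_apply, sub_self, Fin.cases_zero,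
    mul_one, Fin.succAbove_zero, one_mul, Fin.val_succ, Fin.cases_succ, mul_zero, zero_mul,
    Finset.sum_const_zero, add_zero, B]
  exact (det_transpose _).symm

end Matrix

theorem indicator_univ_pi_det {ι α : Type*} [Fintype ι] [DecidableEq ι] (s : ι → Set α)
    (f : ι → α → ℝ) (y : ι → α) :
    (Set.univ.pi s).indicator (fun y => (Matrix.of fun e i => f e (y i)).det) y
      = (Matrix.of fun e i => (s i).indicator (f e) (y i)).det := by
  by_cases hy : y ∈ Set.univ.pi s
  · rw [Set.indicator_of_mem hy]
    congr 1
    ext e i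
    simp [Set.indicator_of_mem (hy i (Set.mem_univ i))]
  · obtain ⟨i, hi⟩ : ∃ i, y i ∉ s i := by simpa [Set.mem_univ_pi] using hy
    rw [Set.indicator_of_notMem hy, Matrix.det_eq_zero_of_column_eq_zero i]
    simp [Set.indicator_of_notMem hi]

theorem integral_pi_det_of_apply {ι α : Type*} [Fintype ι] [DecidableEq ι] [MeasurableSpace α]
    {μ : ι → Measure α} [∀ i, SigmaFinite (μ i)] (g : ι → ι → α → ℝ)
    (hg : ∀ e i, Integrable (g e i) (μ i)) :
    ∫ y, (Matrix.of fun e i => g e i (y i)).det ∂Measure.pi μ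
      = (Matrix.of fun e i => ∫ t, g e i t ∂μ i).det := by
  simp only [Matrix.det_apply', Matrix.of_apply]
  rw [integral_finsetSum _ fun σ _ => (Integrable.fintype_prod fun i => hg (σ i) i).const_mul _]
  simp only [integral_const_mul, integral_fintype_prod_eq_prod]

theorem integral_Icc_pow {a b : ℝ} (hab : a ≤ b) (n : ℕ) :
    ∫ t in Set.Icc a b, t ^ n = (b ^ (n + 1) - a ^ (n + 1)) / (n + 1) := by
  rw [integral_Icc_eq_integral_Ioc, ← intervalIntegral.integral_of_le hab, integral_pow]

theorem prod_inv_val_add_one_eq_inv_factorial (N : ℕ) :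
    ∏ e : Fin N, ((e : ℝ) + 1)⁻¹ = (N.factorial : ℝ)⁻¹ := by
  rw [Finset.prod_inv_distrib, Fin.prod_univ_eq_prod_range (fun i => (i : ℝ) + 1)]
  exact_mod_cast congrArg (fun n : ℕ => (n : ℝ)⁻¹) (Finset.prod_range_add_one_eq_factorial N)

theorem Vand10_eq_det {n : ℕ} (v : Fin n → ℝ) :
    Vand10 v = (Matrix.of fun e i : Fin n => v i ^ (e : ℕ)).det := by
  rw [← Matrix.det_transpose, Vand10, ← Matrix.det_vandermonde]
  rfl

theorem W110_eq_univ_pi {N : ℕ} (x : Fin (N + 1) → ℝ) :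
    W110 x = Set.univ.pi fun k => Set.Icc (x k.castSucc) (x k.succ) := by
  ext y
  simp only [W110, Set.mem_univ_pi, Set.mem_Icc, Set.mem_ofPred_eq]

/-- `∫_{W^{N,N+1}(x)} Δ_N(y) dy = Δ_{N+1}(x)/N!`, i.e. the kernel `L_N^{N+1}(x,·)`
has total mass 1. -/
theorem stmt10 (N : ℕ) (x : Fin (N + 1) → ℝ) (hx : StrictMono x) :
    (∫ y : Fin N → ℝ, Set.indicator (W110 x) (fun y => Vand10 y) y)
      = Vand10 x / (Nat.factorial N : ℝ) := by
  have hle (k : Fin N) : x k.castSucc ≤ x k.succ := hx.monotone (Fin.castSucc_le_succ k)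
  have hint (e k : Fin N) :
      Integrable ((Set.Icc (x k.castSucc) (x k.succ)).indicator (· ^ (e : ℕ))) :=
    (continuous_pow _).integrableOn_Icc.integrable_indicator measurableSet_Icc
  calc _ = ∫ y : Fin N → ℝ, (Matrix.of fun e k : Fin N =>
          (Set.Icc (x k.castSucc) (x k.succ)).indicator (· ^ (e : ℕ)) (y k)).det := by
        congr 1 with y
        rw [W110_eq_univ_pi, funext Vand10_eq_det]
        exact indicator_univ_pi_det _ (fun (e : Fin N) t => t ^ (e : ℕ)) y
    _ = (Matrix.of fun e k : Fin N => ((e : ℝ) + 1)⁻¹ *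
          (x k.succ ^ ((e : ℕ) + 1) - x k.castSucc ^ ((e : ℕ) + 1))).det := by
        rw [volume_pi, integral_pi_det_of_apply _ hint]
        congr 1 with e k
        simp [integral_indicator measurableSet_Icc, integral_Icc_pow (hle k), div_eq_inv_mul]
    _ = (∏ e : Fin N, ((e : ℝ) + 1)⁻¹) * Vand10 x :=
        (Matrix.det_mul_column _ (Matrix.of fun e k : Fin N =>
          x k.succ ^ ((e : ℕ) + 1) - x k.castSucc ^ ((e : ℕ) + 1))).trans
          (by rw [Matrix.det_of_pow_succ_sub_pow_castSucc, Vand10_eq_det])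
    _ = _ := by rw [prod_inv_val_add_one_eq_inv_factorial, inv_mul_eq_div]
end
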